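/- Rewiring preserves correctness through a connected retarget: let f be a linking on a sequent, l a negative I-labelled leaf, and suppose the targets t₁ = f(l) and t₂ of a proposed retarget are connected by a path of f-edges not through l; then the leaf function f' obtained from f by setting f'(l) = t₂ also satisfies the switching criterion. In particular, retargeting the edge from l along the path in f starting at a negative leaf l⁻ to the positive leaf at its end preserves correctness. -/

import Mathlib

attribute [local instance] Classical.propDecidable

namespace Nets

/-- A star-autonomous shape over a type `A` of generators: an expression built
from generators and the unit `I` by binary tensor and unary dual. -/
inductive Shape (A : Type) : Type where
  | gen : A → Shape A
  | unit : Shape A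
  | tensor : Shape A → Shape A → Shape A
  | dual : Shape A → Shape A

/-- A vertex of the parse tree of a shape. -/
inductive Vtx {A : Type} : Shape A → Type where
  | root (S : Shape A) : Vtx S
  | tleft {S T : Shape A} : Vtx S → Vtx (Shape.tensor S T)
  | tright {S T : Shape A} : Vtx T → Vtx (Shape.tensor S T)
  | dchild {S : Shape A} : Vtx S → Vtx (Shape.dual S)

namespace Shape

variable {A : Type}

/-- The sign of a vertex: `true` (positive) iff it is under an even number of duals. -/
def vsign : {S : Shape A} → Vtx S → Bool
  | _, .root _ => true
  | _, .tleft v => vsign v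
  | _, .tright v => vsign v
  | _, .dchild v => !vsign v

/-- The subshape rooted at a vertex. -/
def subtreeAt : {S : Shape A} → Vtx S → Shape A
  | S, .root _ => S
  | _, .tleft v => subtreeAt v
  | _, .tright v => subtreeAt v
  | _, .dchild v => subtreeAt v

/-- Atoms: generators and the unit. -/
def IsAtom : Shape A → Prop
  | gen _ => True
  | unit => True
  | _ => False

def IsTensorSh : Shape A → Prop
  | tensor _ _ => True
  | _ => False

/-- The generator labelling a shape, if any. -/
def lblSh : Shape A → Option A
  | gen a => some a
  | _ => none

/-- The parent of a vertex in the parse tree (none at the root). -/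
def parent : {S : Shape A} → Vtx S → Option (Vtx S)
  | _, .root _ => none
  | _, .tleft v => some (match parent v with | none => .root _ | some p => .tleft p)
  | _, .tright v => some (match parent v with | none => .root _ | some p => .tright p)
  | _, .dchild v => some (match parent v with | none => .root _ | some p => .dchild p)

/-- Which argument of its parent a vertex is (false = left, true = right);
only meaningful when the parent is a tensor. -/
def sideOf : {S : Shape A} → Vtx S → Bool
  | _, .root _ => false
  | _, .tleft v => match v with
    | .root _ => false
    | w => sideOf w
  | _, .tright v => match v with
    | .root _ => true
    | w => sideOf w
  | _, .dchild v => match v with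
    | .root _ => false
    | w => sideOf w

end Shape

open Shape

/-- A cut sequent: a family of shapes (the sequent proper) together with a
family of cut pairs, the cut pair at `j` consisting of `cuts j` and its dual,
joined by a cut edge between their roots.  A plain sequent is the case where
the cut index type `κ` is empty. -/
structure CutSeq (A : Type) where
  ι : Type
  main : ι → Shape A
  κ : Type
  cuts : κ → Shape A

namespace CutSeq

variable {A : Type}

/-- The vertices of (the parse forest of) a cut sequent. -/
def Vt (Γ : CutSeq A) : Type :=
  (Σ i : Γ.ι, Vtx (Γ.main i)) ⊕ (Σ j : Γ.κ, (Vtx (Γ.cuts j) ⊕ Vtx (Shape.dual (Γ.cuts j))))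

variable {Γ : CutSeq A}

def sgn : Γ.Vt → Bool
  | .inl ⟨_, v⟩ => vsign v
  | .inr ⟨_, .inl v⟩ => vsign v
  | .inr ⟨_, .inr v⟩ => vsign v

def shapeAt : Γ.Vt → Shape A
  | .inl ⟨_, v⟩ => subtreeAt v
  | .inr ⟨_, .inl v⟩ => subtreeAt v
  | .inr ⟨_, .inr v⟩ => subtreeAt v

def leaf (v : Γ.Vt) : Prop := IsAtom (shapeAt v)
def unitLeaf (v : Γ.Vt) : Prop := shapeAt v = Shape.unit
def lblAt (v : Γ.Vt) : Option A := lblSh (shapeAt v)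

def par : Γ.Vt → Option Γ.Vt
  | .inl ⟨i, v⟩ => (parent v).map fun p => .inl ⟨i, p⟩
  | .inr ⟨j, .inl v⟩ => (parent v).map fun p => .inr ⟨j, .inl p⟩
  | .inr ⟨j, .inr v⟩ => (parent v).map fun p => .inr ⟨j, .inr p⟩

def side : Γ.Vt → Bool
  | .inl ⟨_, v⟩ => sideOf v
  | .inr ⟨_, .inl v⟩ => sideOf v
  | .inr ⟨_, .inr v⟩ => sideOf v

/-- Switched vertices: negative tensors (one argument edge is deleted in a switching). -/
def switched (v : Γ.Vt) : Prop := IsTensorSh (shapeAt v) ∧ sgn v = false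

def IsNeg (v : Γ.Vt) : Prop := leaf v ∧ sgn v = false
def IsPos (v : Γ.Vt) : Prop := leaf v ∧ sgn v = true

def NegLeaf (Γ : CutSeq A) : Type := {v : Γ.Vt // IsNeg v}
def PosLeaf (Γ : CutSeq A) : Type := {v : Γ.Vt // IsPos v}

/-- The cut edges, joining the roots of the two shapes of each cut pair. -/
def cutEdge (a b : Γ.Vt) : Prop :=
  ∃ j : Γ.κ, a = .inr ⟨j, .inl (Vtx.root _)⟩ ∧ b = .inr ⟨j, .inr (Vtx.root _)⟩

/-- A lax leaf function: every negative leaf gets an edge; edges from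
generator-labelled leaves must target positive leaves, edges from negative
unit leaves may target arbitrary vertices. -/
structure LaxLF (Γ : CutSeq A) where
  f : NegLeaf Γ → Γ.Vt
  gen_ok : ∀ v : NegLeaf Γ, ¬ unitLeaf v.1 → IsPos (f v)

/-- Standard leaf functions: every edge targets a positive leaf. -/
def IsStandard (L : LaxLF Γ) : Prop := ∀ v, IsPos (L.f v)

/-- The switching determined by `σ`: delete the argument edge on the
non-chosen side of every negative tensor; keep parse edges, cut edges and
the (undirected) edges of the leaf function. -/
def switchGraph (L : LaxLF Γ) (σ : Γ.Vt → Bool) : SimpleGraph Γ.Vt :=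
  SimpleGraph.fromRel fun a b =>
    (par a = some b ∧ (switched b → σ b = side a)) ∨ cutEdge a b ∨
      ∃ h : IsNeg a, L.f ⟨a, h⟩ = b

/-- The switching criterion: every switching is a tree. -/
def SwitchOK (L : LaxLF Γ) : Prop := ∀ σ : Γ.Vt → Bool, (switchGraph L σ).IsTree

/-- The matching criterion: the restriction of the leaf function to
`a`-labelled leaves is a label-preserving bijection, for each generator `a`. -/
def Matching (L : LaxLF Γ) : Prop :=
  (∀ (v : NegLeaf Γ) (a : A), lblAt v.1 = some a → lblAt (L.f v) = some a) ∧
  (∀ v w : NegLeaf Γ, ¬ unitLeaf v.1 → ¬ unitLeaf w.1 → L.f v = L.f w → v = w) ∧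
  (∀ (w : PosLeaf Γ) (a : A), lblAt w.1 = some a →
      ∃ v : NegLeaf Γ, ¬ unitLeaf v.1 ∧ L.f v = w.1)

/-- A lax linking: a lax leaf function satisfying matching and the switching criterion. -/
def IsLaxLink (L : LaxLF Γ) : Prop := Matching L ∧ SwitchOK L

/-- A (standard) linking. -/
def IsLink (L : LaxLF Γ) : Prop := IsLaxLink L ∧ IsStandard L

/-- Similarity (Trimble rewiring): two lax linkings differing only in the
target of one edge from a negative unit leaf. -/
def Similar (L L' : LaxLF Γ) : Prop :=
  IsLaxLink L ∧ IsLaxLink L' ∧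
  ∃ u : NegLeaf Γ, unitLeaf u.1 ∧ ∀ v : NegLeaf Γ, v ≠ u → L.f v = L'.f v

/-- Lax equivalence: chains of similar lax linkings. -/
def LaxEquiv : LaxLF Γ → LaxLF Γ → Prop := Relation.ReflTransGen Similar

def StdSimilar (L L' : LaxLF Γ) : Prop := Similar L L' ∧ IsStandard L ∧ IsStandard L'

/-- Standard equivalence: chains of similar standard linkings. -/
def StdEquiv : LaxLF Γ → LaxLF Γ → Prop := Relation.ReflTransGen StdSimilar

end CutSeq

open CutSeq

/-- The (cut-free) sequent `S^⊥, T` encoding a two-sided linking `S → T`. -/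
def two {A : Type} (S T : Shape A) : CutSeq A where
  ι := Bool
  main := fun b => match b with
    | false => Shape.dual S
    | true => T
  κ := Empty
  cuts := fun j => j.elim

end Nets

namespace Nets

open Shape CutSeq

variable {A : Type} {Γ : CutSeq A}

/-- Re-target the edge from the negative leaf `l` to point at `t` instead.
(Legitimate when `t` is a positive leaf, or when `l` is a unit leaf.) -/
noncomputable def retarget (L : LaxLF Γ) (l : NegLeaf Γ) (t : Γ.Vt)
    (ht : IsPos t ∨ unitLeaf l.1) : LaxLF Γ where
  f v := if v = l then t else L.f v
  gen_ok v hv := by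
    by_cases hvl : v = l
    · subst hvl
      simp only [if_pos rfl]
      rcases ht with h1 | h2
      · exact h1
      · exact absurd h2 hv
    · simp only [if_neg hvl]; exact L.gen_ok v hv

/-- Re-target the edge from a negative unit leaf. -/
noncomputable def retargetU (L : LaxLF Γ) (l : NegLeaf Γ) (hu : unitLeaf l.1) (t : Γ.Vt) : LaxLF Γ :=
  retarget L l t (Or.inr hu)

/-- The undirected edges of `L` other than the edge from `l`. -/
def fPath (L : LaxLF Γ) (l : NegLeaf Γ) : Γ.Vt → Γ.Vt → Prop :=
  fun a b => ∃ n : NegLeaf Γ, n ≠ l ∧ ((a = n.1 ∧ b = L.f n) ∨ (b = n.1 ∧ a = L.f n))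

end Nets

/-!
Retargeting the edge from `l` changes every switching graph by trading the edge `l — f(l)` for
`l — t`. The path of `f`-edges from `f(l)` to `t` avoids the edge of `l`, so it survives the
deletion of `l — f(l)` (the only switching edge joining these two leaves): `t` lies on the
`f(l)`-side of that tree edge, and trading a tree edge for another edge across the same cut
gives a tree again.
-/

namespace SimpleGraph

variable {V : Type*} {G : SimpleGraph V}

theorem reachable_of_reflTransGen {r : V → V → Prop} (h : r ≤ G.Reachable) {u v : V}
    (huv : Relation.ReflTransGen r u v) : G.Reachable u v :=
  Relation.reflTransGen_le_of_equivalence_of_le G.reachable_is_equivalence h u v huv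

theorem IsTree.deleteEdges_sup_edge (hG : G.IsTree) {x y z : V} (hxy : G.Adj x y)
    (hyz : (G.deleteEdges {s(x, y)}).Reachable y z) :
    (G.deleteEdges {s(x, y)} ⊔ edge x z).IsTree := by
  set H := G.deleteEdges {s(x, y)}
  have hbridge : ¬ H.Reachable x y :=
    isBridge_iff.mp (isAcyclic_iff_forall_isBridge.mp hG.isAcyclic hxy)
  have hxz : ¬ H.Reachable x z := fun hxz => hbridge (hxz.trans hyz.symm)
  have hyx : (H ⊔ edge x z).Reachable y x := by
    refine (hyz.mono le_sup_left).trans (Adj.reachable ?_).symm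
    exact Or.inr ⟨by simp, by rintro rfl; exact hxz .rfl⟩
  have hacyclic : (H ⊔ edge x z).IsAcyclic :=
    (hG.isAcyclic.anti (deleteEdges_le _)).sup_edge_of_not_reachable hxz
  have := hG.connected.nonempty
  refine ⟨⟨fun u v => ?_⟩, hacyclic⟩
  -- the endpoints of every edge of `G` stay connected, those of `xy` through `z`
  refine reachable_of_reflTransGen (fun a b hab => ?_)
    ((reachable_iff_reflTransGen u v).mp (hG.connected.preconnected u v))
  by_cases he : s(a, b) = s(x, y)
  · rcases Sym2.eq_iff.mp he with ⟨rfl, rfl⟩ | ⟨rfl, rfl⟩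
    exacts [hyx.symm, hyx]
  · exact (deleteEdges_adj.mpr ⟨hab, he⟩).reachable.mono le_sup_left

end SimpleGraph

namespace Nets

open Shape CutSeq SimpleGraph

variable {A : Type} {Γ : CutSeq A}

theorem Shape.not_isAtom_of_parent_eq_some {S : Shape A} {v p : Vtx S} (h : parent v = some p) :
    ¬ IsAtom (subtreeAt p) := by
  induction v with
  | root => simp [parent] at h
  | tleft v ih | tright v ih | dchild v ih =>
    simp only [parent, Option.some.injEq] at h
    subst h
    cases hp : parent v with
    | none => simp [subtreeAt, IsAtom]
    | some q => simpa [subtreeAt] using ih hp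

namespace CutSeq

theorem not_leaf_of_par_eq_some {a b : Γ.Vt} (h : par a = some b) : ¬ leaf b := by
  rcases a with ⟨i, v⟩ | ⟨j, v | v⟩ <;>
  · obtain ⟨p, hp, rfl⟩ := Option.map_eq_some_iff.mp h
    exact not_isAtom_of_parent_eq_some hp

theorem not_leaf_of_cutEdge {a b : Γ.Vt} (h : cutEdge a b) : ¬ leaf b := by
  obtain ⟨j, -, rfl⟩ := h
  simp [leaf, shapeAt, subtreeAt, Shape.IsAtom]

theorem IsNeg.ne_of_isPos {a b : Γ.Vt} (ha : IsNeg a) (hb : IsPos b) : a ≠ b := by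
  rintro rfl
  simp [IsPos, ha.2] at hb

def SkelEdge (σ : Γ.Vt → Bool) (a b : Γ.Vt) : Prop :=
  (par a = some b ∧ (switched b → σ b = side a)) ∨ cutEdge a b

def LeafEdge (L : LaxLF Γ) (a b : Γ.Vt) : Prop := ∃ h : IsNeg a, L.f ⟨a, h⟩ = b

theorem switchGraph_eq_fromRel (L : LaxLF Γ) (σ : Γ.Vt → Bool) :
    switchGraph L σ = fromRel fun a b => SkelEdge σ a b ∨ LeafEdge L a b := by
  simp only [switchGraph, SkelEdge, LeafEdge, or_assoc]

theorem SkelEdge.not_leaf {σ : Γ.Vt → Bool} {a b : Γ.Vt} (h : SkelEdge σ a b) : ¬ leaf b :=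
  h.elim (fun h => not_leaf_of_par_eq_some h.1) not_leaf_of_cutEdge

theorem leafEdge_val_iff (L : LaxLF Γ) (v : NegLeaf Γ) (b : Γ.Vt) :
    LeafEdge L v.1 b ↔ L.f v = b :=
  ⟨fun ⟨_, h⟩ => h, fun h => ⟨v.2, h⟩⟩

theorem switchGraph_adj_f (L : LaxLF Γ) (σ : Γ.Vt → Bool) (v : NegLeaf Γ)
    (hv : IsPos (L.f v)) :
    (switchGraph L σ).Adj v.1 (L.f v) := by
  rw [switchGraph_eq_fromRel, fromRel_adj]
  exact ⟨v.2.ne_of_isPos hv, .inl (.inr ((leafEdge_val_iff L v _).mpr rfl))⟩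

end CutSeq

section Retarget

variable (L : LaxLF Γ) {l : NegLeaf Γ} {t : Γ.Vt} (ht : IsPos t ∨ unitLeaf l.1)

theorem retarget_f_of_ne {v : NegLeaf Γ} (hv : v ≠ l) : (retarget L l t ht).f v = L.f v :=
  if_neg hv

theorem retarget_f_self : (retarget L l t ht).f l = t :=
  if_pos rfl

theorem leafEdge_retarget_of_ne {a : Γ.Vt} (ha : a ≠ l.1) (b : Γ.Vt) :
    LeafEdge (retarget L l t ht) a b ↔ LeafEdge L a b :=
  exists_congr fun h => by
    rw [retarget_f_of_ne L ht (v := ⟨a, h⟩) fun e => ha (congrArg Subtype.val e)]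

theorem switchGraph_retarget (hl : IsPos (L.f l)) (σ : Γ.Vt → Bool) :
    switchGraph (retarget L l t ht) σ =
      (switchGraph L σ).deleteEdges {s(l.1, L.f l)} ⊔ edge l.1 t := by
  have hfl : ¬ LeafEdge L (L.f l) l.1 := fun ⟨h, _⟩ => h.ne_of_isPos hl rfl
  have hskel_l : ∀ c, ¬ SkelEdge σ c l.1 := fun c h => h.not_leaf l.2.1
  have hskel_fl : ¬ SkelEdge σ l.1 (L.f l) := fun h => h.not_leaf hl.1
  ext a b
  simp only [switchGraph_eq_fromRel, fromRel_adj, sup_adj, deleteEdges_adj, edge_adj,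
    Set.mem_singleton_iff, Sym2.eq_iff]
  by_cases ha : a = l.1 <;> by_cases hb : b = l.1
  · subst ha hb; simp
  · subst ha
    simp only [leafEdge_val_iff, retarget_f_self, leafEdge_retarget_of_ne L ht hb]
    grind
  · subst hb
    simp only [leafEdge_val_iff, retarget_f_self, leafEdge_retarget_of_ne L ht ha]
    grind
  · simp only [leafEdge_retarget_of_ne L ht ha, leafEdge_retarget_of_ne L ht hb]
    grind

end Retarget

theorem CutSeq.SwitchOK.retarget {L : LaxLF Γ} (hL : SwitchOK L) {l : NegLeaf Γ} {t : Γ.Vt}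
    (ht : IsPos t ∨ unitLeaf l.1) (hl : IsPos (L.f l))
    (hconn : ∀ σ, ((switchGraph L σ).deleteEdges {s(l.1, L.f l)}).Reachable (L.f l) t) :
    SwitchOK (retarget L l t ht) := by
  intro σ
  rw [switchGraph_retarget L ht hl σ]
  exact (hL σ).deleteEdges_sup_edge (switchGraph_adj_f L σ l hl) (hconn σ)

theorem reachable_deleteEdges_of_fPath {L : LaxLF Γ} (hstd : IsStandard L) (l : NegLeaf Γ)
    (σ : Γ.Vt → Bool) {a b : Γ.Vt} (hab : Relation.ReflTransGen (fPath L l) a b) :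
    ((switchGraph L σ).deleteEdges {s(l.1, L.f l)}).Reachable a b := by
  refine reachable_of_reflTransGen (fun a b ⟨n, hnl, hab⟩ => ?_) hab
  have hadj : ((switchGraph L σ).deleteEdges {s(l.1, L.f l)}).Adj n.1 (L.f n) := by
    refine deleteEdges_adj.mpr ⟨switchGraph_adj_f L σ n (hstd n), ?_⟩
    rw [Set.mem_singleton_iff, Sym2.eq_iff]
    rintro (⟨hn, -⟩ | ⟨hn, -⟩)
    exacts [hnl (Subtype.ext hn), n.2.ne_of_isPos (hstd l) hn]
  rcases hab with ⟨rfl, rfl⟩ | ⟨rfl, rfl⟩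
  exacts [hadj.reachable, hadj.reachable.symm]

theorem statement16_general (A : Type) (Γ : CutSeq A)
    (L : LaxLF Γ) (hL : IsLaxLink L) (hstd : IsStandard L)
    (l : NegLeaf Γ)
    (t : Γ.Vt) (ht : IsPos t)
    (hconn : Relation.ReflTransGen (fPath L l) (L.f l) t) :
    SwitchOK (retarget L l t (Or.inl ht)) :=
  hL.2.retarget _ (hstd l) fun σ => reachable_deleteEdges_of_fPath hstd l σ hconn

/-- Rewiring preserves correctness through a connected
retarget: if `f` is a (standard) linking on a sequent, `l` a negative
`I`-labelled leaf, and the old target `f(l)` is connected to the new target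
`t` by a path of `f`-edges not through `l`, then the retargeted leaf function
still satisfies the switching criterion. -/
theorem statement16 (A : Type) (Γ : CutSeq A) (hκ : IsEmpty Γ.κ)
    (L : LaxLF Γ) (hL : IsLaxLink L) (hstd : IsStandard L)
    (l : NegLeaf Γ) (hu : unitLeaf l.1)
    (t : Γ.Vt) (ht : IsPos t)
    (hconn : Relation.ReflTransGen (fPath L l) (L.f l) t) :
    SwitchOK (retarget L l t (Or.inl ht)) :=
  statement16_general A Γ L hL hstd l t ht hconn

end Nets
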